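/- Define φ_ℓ(z) := ∫_{−1}^{1} P_ℓ(y)/(y+z) dy for z > 1. For every odd positive integer ℓ: (a) the map z ↦ φ_ℓ(z) is strictly monotone increasing on (1, +∞) and φ_ℓ(z) < 0 there; (b) |φ_ℓ(z)| ≤ 2^{−ℓ} ( ∫_{−1}^{1} (1−y²)^ℓ dy ) / (z−1)^{ℓ+1} for all z > 1; (c) lim_{z→+∞} (z−1)^{ℓ+1} φ_ℓ(z) = −2^{−ℓ} ∫_{−1}^{1} (1−y²)^ℓ dy. -/

import Mathlib

/-! Integrating by parts `ℓ` times in the Rodrigues formula (the boundary terms vanish because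
`(y² - 1)^ℓ` has zeros of order `ℓ` at `±1`) gives `φ_ℓ(z) = (-1)^ℓ 2^{-ℓ} ψ_ℓ(z)` with
`ψ_ℓ(z) = ∫_{-1}^{1} (1 - y²)^ℓ / (y + z)^{ℓ+1} dy`. Everything then follows from `ψ_ℓ` being
positive and strictly decreasing on `(1, ∞)` and from the squeeze
`C / (z + 1)^{ℓ+1} ≤ ψ_ℓ(z) ≤ C / (z - 1)^{ℓ+1}`, `C = ∫_{-1}^{1} (1 - y²)^ℓ dy`. -/

noncomputable section

/-- The `ℓ`-th Legendre polynomial via the Rodrigues formula. -/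
def legendreP (l : ℕ) (y : ℝ) : ℝ :=
  (1 / ((2 : ℝ) ^ l * (Nat.factorial l : ℝ))) *
    iteratedDeriv l (fun t : ℝ => (t ^ 2 - 1) ^ l) y

/-- `φ_ℓ(z) = ∫_{−1}^{1} P_ℓ(y)/(y+z) dy` for `z > 1`. -/
def phiL (l : ℕ) (z : ℝ) : ℝ :=
  ∫ y in (-1 : ℝ)..1, legendreP l y / (y + z)

open Polynomial Set MeasureTheory intervalIntegral Filter Topology
open scoped Interval

lemma iteratedDeriv_polynomial_eval (n : ℕ) (p : ℝ[X]) :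
    iteratedDeriv n (fun t => p.eval t) = fun t => (derivative^[n] p).eval t := by
  have h : Function.Semiconj (fun q : ℝ[X] => fun t => q.eval t) derivative deriv :=
    fun q => funext fun t => (Polynomial.deriv q).symm
  rw [iteratedDeriv_eq_iterate]
  exact (h.iterate_right n p).symm

lemma legendreP_eq_eval (l : ℕ) (y : ℝ) :
    legendreP l y =
      (2 ^ l * l.factorial : ℝ)⁻¹ * (derivative^[l] ((X ^ 2 - 1 : ℝ[X]) ^ l)).eval y := by
  have h : (fun t : ℝ => (t ^ 2 - 1) ^ l) = fun t => ((X ^ 2 - 1 : ℝ[X]) ^ l).eval t := by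
    simp
  rw [legendreP, h, iteratedDeriv_polynomial_eval, one_div]

lemma eval_iterate_derivative_pow_eq_zero {R : Type*} [CommRing R] {p : R[X]} {a : R}
    (ha : p.eval a = 0) {m n : ℕ} (hmn : m < n) : (derivative^[m] (p ^ n)).eval a = 0 := by
  obtain ⟨q, hq⟩ := pow_sub_dvd_iterate_derivative_pow p n m
  rw [hq, eval_mul, eval_pow, ha, zero_pow (Nat.sub_ne_zero_of_lt hmn), zero_mul]

lemma hasDerivAt_inv_add_pow (k : ℕ) {y z : ℝ} (hy : y + z ≠ 0) :
    HasDerivAt (fun y => ((y + z) ^ (k + 1))⁻¹) (-(k + 1) * ((y + z) ^ (k + 2))⁻¹) y := by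
  refine ((((hasDerivAt_id' y).add_const z).fun_pow (k + 1)).fun_inv
    (pow_ne_zero _ hy)).congr_deriv ?_
  rw [Nat.add_sub_cancel]
  field_simp
  push_cast
  ring

section CauchyKernel

variable {a b z : ℝ} (hab : ∀ y ∈ [[a, b]], y + z ≠ 0)
include hab

lemma intervalIntegrable_inv_add_pow (k : ℕ) :
    IntervalIntegrable (fun y => ((y + z) ^ k)⁻¹) volume a b :=
  (ContinuousOn.inv₀ (by fun_prop) fun y hy => pow_ne_zero _ (hab y hy)).intervalIntegrable

lemma integral_derivative_mul_inv_add_pow {p : ℝ[X]} (hpa : p.eval a = 0) (hpb : p.eval b = 0)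
    (k : ℕ) :
    ∫ y in a..b, (derivative p).eval y * ((y + z) ^ (k + 1))⁻¹ =
      (k + 1) * ∫ y in a..b, p.eval y * ((y + z) ^ (k + 2))⁻¹ := by
  have h := integral_mul_deriv_eq_deriv_mul (a := a) (b := b)
    (fun y hy => hasDerivAt_inv_add_pow k (hab y hy)) (fun y _ => p.hasDerivAt y)
    ((intervalIntegrable_inv_add_pow hab (k + 2)).const_mul _)
    (p.derivative.continuous.intervalIntegrable _ _)
  simp only [hpa, hpb, mul_zero, sub_zero, zero_sub] at h
  calc ∫ y in a..b, (derivative p).eval y * ((y + z) ^ (k + 1))⁻¹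
      = ∫ y in a..b, ((y + z) ^ (k + 1))⁻¹ * (derivative p).eval y := by simp_rw [mul_comm]
    _ = (k + 1) * ∫ y in a..b, p.eval y * ((y + z) ^ (k + 2))⁻¹ := by
      rw [h, ← intervalIntegral.integral_const_mul, ← intervalIntegral.integral_neg]
      congr 1
      ext y
      ring

lemma integral_iterate_derivative_mul_inv_add (n : ℕ) {q : ℝ[X]}
    (hq : ∀ m < n, (derivative^[m] q).eval a = 0 ∧ (derivative^[m] q).eval b = 0) :
    ∫ y in a..b, (derivative^[n] q).eval y * (y + z)⁻¹ =
      n.factorial * ∫ y in a..b, q.eval y * ((y + z) ^ (n + 1))⁻¹ := by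
  induction n generalizing q with
  | zero => simp
  | succ n ih =>
    obtain ⟨hqa, hqb⟩ : q.eval a = 0 ∧ q.eval b = 0 := hq 0 n.succ_pos
    rw [Function.iterate_succ_apply, ih fun m hm => hq (m + 1) (by omega),
      integral_derivative_mul_inv_add_pow hab hqa hqb, Nat.factorial_succ]
    push_cast
    ring

end CauchyKernel

lemma add_ne_zero_of_mem_uIcc {y z : ℝ} (hz : 1 < z) (hy : y ∈ [[(-1 : ℝ), 1]]) : y + z ≠ 0 := by
  rw [uIcc_of_le (by norm_num)] at hy
  linarith [hy.1]

def psiL (l : ℕ) (z : ℝ) : ℝ :=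
  ∫ y in (-1 : ℝ)..1, (1 - y ^ 2) ^ l * ((y + z) ^ (l + 1))⁻¹

lemma phiL_eq_psiL (l : ℕ) {z : ℝ} (hz : 1 < z) : phiL l z = (-1) ^ l / 2 ^ l * psiL l z := by
  have hq : ∀ m < l, (derivative^[m] ((X ^ 2 - 1 : ℝ[X]) ^ l)).eval (-1) = 0 ∧
      (derivative^[m] ((X ^ 2 - 1 : ℝ[X]) ^ l)).eval 1 = 0 :=
    fun m hm => ⟨eval_iterate_derivative_pow_eq_zero (by simp) hm,
      eval_iterate_derivative_pow_eq_zero (by simp) hm⟩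
  have hibp :=
    integral_iterate_derivative_mul_inv_add (fun y hy => add_ne_zero_of_mem_uIcc hz hy) l hq
  have hphi : phiL l z = (2 ^ l * l.factorial : ℝ)⁻¹ *
      ∫ y in (-1 : ℝ)..1, (derivative^[l] ((X ^ 2 - 1 : ℝ[X]) ^ l)).eval y * (y + z)⁻¹ := by
    rw [phiL, ← intervalIntegral.integral_const_mul]
    congr 1
    ext y
    rw [legendreP_eq_eval, div_eq_mul_inv, mul_assoc]
  have hsign (y : ℝ) : ((X ^ 2 - 1 : ℝ[X]) ^ l).eval y = (-1) ^ l * (1 - y ^ 2) ^ l := by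
    rw [← mul_pow]
    simp
  rw [hphi, hibp, psiL, ← mul_assoc, ← intervalIntegral.integral_const_mul,
    ← intervalIntegral.integral_const_mul]
  refine integral_congr fun y _ => ?_
  rw [hsign]
  field_simp

section Psi

variable (l : ℕ)

lemma one_sub_sq_pow_nonneg {y : ℝ} (hy : y ∈ Icc (-1 : ℝ) 1) : 0 ≤ (1 - y ^ 2) ^ l :=
  pow_nonneg (by nlinarith [hy.1, hy.2]) l

lemma integral_one_sub_sq_pow_pos : 0 < ∫ y in (-1 : ℝ)..1, (1 - y ^ 2) ^ l :=
  integral_pos (by norm_num) (by fun_prop)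
    (fun _ hy => one_sub_sq_pow_nonneg l (Ioc_subset_Icc_self hy)) ⟨0, by norm_num, by norm_num⟩

lemma one_sub_sq_pow_mul_inv_pow_anti {y u v : ℝ} (hy : y ∈ Icc (-1 : ℝ) 1) (hu : 0 < u)
    (huv : u ≤ v) : (1 - y ^ 2) ^ l * (v ^ (l + 1))⁻¹ ≤ (1 - y ^ 2) ^ l * (u ^ (l + 1))⁻¹ := by
  gcongr
  exact one_sub_sq_pow_nonneg l hy

variable {l}

lemma continuousOn_psiL_integrand {z : ℝ} (hz : 1 < z) :
    ContinuousOn (fun y => (1 - y ^ 2) ^ l * ((y + z) ^ (l + 1))⁻¹) (Icc (-1) 1) :=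
  (continuous_const.sub (continuous_pow 2)).pow l |>.continuousOn.mul <|
    ContinuousOn.inv₀ ((continuous_id.add continuous_const).pow _).continuousOn fun y hy =>
    pow_ne_zero _ (add_ne_zero_of_mem_uIcc hz (by rwa [uIcc_of_le (by norm_num)]))

lemma psiL_le {z : ℝ} (hz : 1 < z) :
    psiL l z ≤ (∫ y in (-1 : ℝ)..1, (1 - y ^ 2) ^ l) / (z - 1) ^ (l + 1) := by
  rw [← intervalIntegral.integral_div, psiL]
  refine integral_mono_on (by norm_num) ((continuousOn_psiL_integrand hz).intervalIntegrable_of_Icc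
    (by norm_num)) (Continuous.intervalIntegrable (by fun_prop) _ _) fun y hy => ?_
  rw [div_eq_mul_inv]
  exact one_sub_sq_pow_mul_inv_pow_anti l hy (by linarith) (by linarith [hy.1])

lemma le_psiL {z : ℝ} (hz : 1 < z) :
    (∫ y in (-1 : ℝ)..1, (1 - y ^ 2) ^ l) / (z + 1) ^ (l + 1) ≤ psiL l z := by
  rw [← intervalIntegral.integral_div, psiL]
  refine integral_mono_on (by norm_num) (Continuous.intervalIntegrable (by fun_prop) _ _)
    ((continuousOn_psiL_integrand hz).intervalIntegrable_of_Icc (by norm_num)) fun y hy => ?_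
  rw [div_eq_mul_inv]
  exact one_sub_sq_pow_mul_inv_pow_anti l hy (by linarith [hy.1]) (by linarith [hy.2])

lemma psiL_pos {z : ℝ} (hz : 1 < z) : 0 < psiL l z :=
  (div_pos (integral_one_sub_sq_pow_pos l) (pow_pos (by linarith) _)).trans_le (le_psiL hz)

lemma psiL_strictAntiOn : StrictAntiOn (psiL l) (Ioi 1) := by
  intro z₁ (hz₁ : 1 < z₁) z₂ (hz₂ : 1 < z₂) hlt
  refine integral_lt_integral_of_continuousOn_of_le_of_exists_lt (by norm_num)
    (continuousOn_psiL_integrand hz₂) (continuousOn_psiL_integrand hz₁)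
    (fun y hy => one_sub_sq_pow_mul_inv_pow_anti l (Ioc_subset_Icc_self hy) (by linarith [hy.1])
      (by linarith)) ⟨0, by norm_num, ?_⟩
  simp only [zero_pow two_ne_zero, sub_zero, one_pow, zero_add, one_mul]
  gcongr

lemma tendsto_sub_one_div_add_one_atTop : Tendsto (fun z : ℝ => (z - 1) / (z + 1)) atTop (𝓝 1) := by
  have h : Tendsto (fun z : ℝ => 1 - 2 / (z + 1)) atTop (𝓝 (1 - 0)) :=
    tendsto_const_nhds.sub <|
      tendsto_const_nhds.div_atTop (tendsto_atTop_add_const_right _ 1 tendsto_id)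
  rw [sub_zero] at h
  refine h.congr' ?_
  filter_upwards [eventually_gt_atTop (-1)] with z hz
  field_simp [(by linarith : z + 1 ≠ 0)]
  ring

lemma tendsto_sub_one_pow_mul_psiL :
    Tendsto (fun z => (z - 1) ^ (l + 1) * psiL l z) atTop
      (𝓝 (∫ y in (-1 : ℝ)..1, (1 - y ^ 2) ^ l)) := by
  set C := ∫ y in (-1 : ℝ)..1, (1 - y ^ 2) ^ l
  have hlower : Tendsto (fun z : ℝ => C * ((z - 1) / (z + 1)) ^ (l + 1)) atTop (𝓝 C) := by
    simpa using (tendsto_sub_one_div_add_one_atTop.pow (l + 1)).const_mul C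
  refine tendsto_of_tendsto_of_tendsto_of_le_of_le' hlower tendsto_const_nhds ?_ ?_
  · filter_upwards [eventually_gt_atTop 1] with z hz
    calc C * ((z - 1) / (z + 1)) ^ (l + 1) = (z - 1) ^ (l + 1) * (C / (z + 1) ^ (l + 1)) := by
          rw [div_pow]; ring
      _ ≤ (z - 1) ^ (l + 1) * psiL l z :=
          mul_le_mul_of_nonneg_left (le_psiL hz) (pow_nonneg (by linarith) _)
  · filter_upwards [eventually_gt_atTop 1] with z hz
    calc (z - 1) ^ (l + 1) * psiL l z ≤ (z - 1) ^ (l + 1) * (C / (z - 1) ^ (l + 1)) :=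
          mul_le_mul_of_nonneg_left (psiL_le hz) (pow_nonneg (by linarith) _)
      _ = C := by field_simp [(sub_pos.2 hz).ne']

end Psi

theorem phiL_odd_properties_general (l : ℕ) (hodd : Odd l) :
    StrictMonoOn (phiL l) (Set.Ioi (1 : ℝ)) ∧
    (∀ z : ℝ, 1 < z → phiL l z < 0) ∧
    (∀ z : ℝ, 1 < z →
      |phiL l z| ≤ (1 / 2 ^ l) * (∫ y in (-1 : ℝ)..1, (1 - y ^ 2) ^ l) / (z - 1) ^ (l + 1)) ∧
    Filter.Tendsto (fun z : ℝ => (z - 1) ^ (l + 1) * phiL l z) Filter.atTop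
      (nhds (-((1 / 2 ^ l) * ∫ y in (-1 : ℝ)..1, (1 - y ^ 2) ^ l))) := by
  have hphi {z : ℝ} (hz : 1 < z) : phiL l z = -(1 / 2 ^ l) * psiL l z := by
    rw [phiL_eq_psiL l hz, hodd.neg_one_pow, neg_div]
  have hc : -(1 / 2 ^ l : ℝ) < 0 := neg_neg_of_pos (by positivity)
  refine ⟨fun z₁ hz₁ z₂ hz₂ hlt => ?_, fun z hz => ?_, fun z hz => ?_, ?_⟩
  · rw [hphi hz₁, hphi hz₂]
    exact mul_lt_mul_of_neg_left (psiL_strictAntiOn hz₁ hz₂ hlt) hc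
  · rw [hphi hz]
    exact mul_neg_of_neg_of_pos hc (psiL_pos hz)
  · rw [hphi hz, abs_mul, abs_neg, abs_of_pos (by positivity), abs_of_pos (psiL_pos hz),
      mul_div_assoc]
    gcongr
    exact psiL_le hz
  · rw [← neg_mul]
    refine ((tendsto_sub_one_pow_mul_psiL (l := l)).const_mul (-(1 / 2 ^ l))).congr' ?_
    filter_upwards [eventually_gt_atTop 1] with z hz
    rw [hphi hz]
    ring

/-- For odd `ℓ`: (a) `z ↦ φ_ℓ(z)` is strictly increasing and negative on `(1, ∞)`;
(b) `|φ_ℓ(z)| ≤ 2^{−ℓ}(∫_{−1}^{1}(1−y²)^ℓ dy)/(z−1)^{ℓ+1}`;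
(c) `(z−1)^{ℓ+1} φ_ℓ(z) → −2^{−ℓ}∫_{−1}^{1}(1−y²)^ℓ dy` as `z → +∞`. -/
theorem phiL_odd_properties (l : ℕ) (hodd : Odd l) (hpos : 0 < l) :
    StrictMonoOn (phiL l) (Set.Ioi (1 : ℝ)) ∧
    (∀ z : ℝ, 1 < z → phiL l z < 0) ∧
    (∀ z : ℝ, 1 < z →
      |phiL l z| ≤ (1 / 2 ^ l) * (∫ y in (-1 : ℝ)..1, (1 - y ^ 2) ^ l) / (z - 1) ^ (l + 1)) ∧
    Filter.Tendsto (fun z : ℝ => (z - 1) ^ (l + 1) * phiL l z) Filter.atTop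
      (nhds (-((1 / 2 ^ l) * ∫ y in (-1 : ℝ)..1, (1 - y ^ 2) ^ l))) :=
  phiL_odd_properties_general l hodd
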